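/- Let λ be a weakly decreasing tuple of nonnegative integers of length n > 2, λ' = (λ_2,…,λ_n), λ'' = (λ_3,…,λ_n), and for 2 ≤ i ≤ n set O_i = ((x_i − t x_1)·x_i^{λ_1} − (x_1 − t x_i)·x_1^{λ_1−λ_2}·x_i^{λ_2}) / (x_i − t x_1). Then, in F, P_λ(x;t) = Σ_{i=2}^n O_i · ∏_{1≤a≤n, a≠i}(x_i − t x_a)/(x_i − x_a) · ζ_i(P_{λ'}(x;t)) − x_1^{λ_1−λ_2} · Σ_{i=2}^n Σ_{2≤j≤n, j≠i} t·x_i^{λ_2}·x_j^{λ_2} · ∏_{1≤a≤n, a≠1,i}(x_i − t x_a)/(x_i − x_a) · ∏_{1≤a≤n, a≠1,i,j}(x_j − t x_a)/(x_j − x_a) · ζ_{i,j}(P_{λ''}(x;t)). -/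

import Mathlib

open MvPolynomial Finset

noncomputable section

abbrev Rr : Type := MvPolynomial (Fin 2 ⊕ ℕ) ℚ

abbrev F : Type := FractionRing Rr

/-- The variable `q`. -/
def q : F := algebraMap Rr F (X (Sum.inl 0))

/-- The variable `t`. -/
def t : F := algebraMap Rr F (X (Sum.inl 1))

/-- `x k` is the variable `x_{k+1}` of the paper (0-indexed). -/
def x (k : ℕ) : F := algebraMap Rr F (X (Sum.inr k))

/-- Substitution endomorphism of `F` induced by an injective map of variables. -/
def subF (g : Fin 2 ⊕ ℕ → Fin 2 ⊕ ℕ) (hg : Function.Injective g) : F →+* F :=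
  IsFractionRing.lift (g := (algebraMap Rr F).comp (rename g).toRingHom)
    (by
      rw [RingHom.coe_comp]
      exact (IsFractionRing.injective Rr F).comp (rename_injective g hg))

def permNat (n : ℕ) (σ : Equiv.Perm (Fin n)) : ℕ → ℕ :=
  fun k => if h : k < n then (σ ⟨k, h⟩ : ℕ) else k

lemma permNat_inj (n : ℕ) (σ : Equiv.Perm (Fin n)) : Function.Injective (permNat n σ) := by
  intro a b hab
  unfold permNat at hab
  split_ifs at hab with h1 h2 h2
  · have := σ.injective (Fin.val_injective hab)
    exact congrArg Fin.val this
  · have := (σ ⟨a, h1⟩).isLt; omega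
  · have := (σ ⟨b, h2⟩).isLt; omega
  · exact hab

/-- The action of a permutation `σ ∈ S_n` on `F`, permuting `x_1, …, x_n`. -/
def pact (n : ℕ) (σ : Equiv.Perm (Fin n)) : F →+* F :=
  subF (Sum.map id (permNat n σ)) (Function.injective_id.sumMap (permNat_inj n σ))

def shiftNat (i : ℕ) : ℕ → ℕ := fun k => if k < i then k else k + 1

lemma shiftNat_inj (i : ℕ) : Function.Injective (shiftNat i) := by
  intro a b; unfold shiftNat; split_ifs <;> omega

/-- `zeta i` is the endomorphism `ζ_{i+1}` of the paper: it fixes `q`, `t` and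
`x k` for `k < i`, and sends `x k` to `x (k+1)` for `k ≥ i` (0-indexed). -/
def zeta (i : ℕ) : F →+* F :=
  subF (Sum.map id (shiftNat i)) (Function.injective_id.sumMap (shiftNat_inj i))

/-- `zetaP i j` is `ζ_{i+1,j+1}` of the paper. -/
def zetaP (i j : ℕ) : F →+* F := (zeta (max i j)).comp (zeta (min i j))

/-- The Hall–Littlewood polynomial `P_λ(x; t)` in `n` variables. -/
def HL (n : ℕ) (lam : Fin n → ℕ) : F :=
  ∑ σ : Equiv.Perm (Fin n), pact n σ
    ((∏ i : Fin n, x i.val ^ lam i) *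
      ∏ i : Fin n, ∏ j ∈ Finset.Ioi i, (x i.val - t * x j.val) / (x i.val - x j.val))

/-- `ρ_n`, 0-indexed: `rho n i = n - 1 - i`. -/
def rho (n : ℕ) : Fin n → ℕ := fun i => n - 1 - i.val

/-- The deformed Weyl denominator `Δ_n(c) = ∏_{i<j} (x_i - c x_j)`. -/
def DeltaQ (n : ℕ) (c : F) : F := ∏ i : Fin n, ∏ j ∈ Finset.Ioi i, (x i.val - c * x j.val)

/-- The Schur polynomial `s_λ(x) = Σ_σ σ(x^{λ+ρ}/Δ_n)`. -/
def Schur (n : ℕ) (lam : Fin n → ℕ) : F :=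
  ∑ σ : Equiv.Perm (Fin n), pact n σ
    ((∏ i : Fin n, x i.val ^ (lam i + rho n i)) / DeltaQ n 1)

/-- `GT2 n α` is the set of tuples `μ` of length `n` with `α_{i+1} ≤ μ_i ≤ α_i`. -/
def GT2 (n : ℕ) (α : Fin (n+1) → ℕ) : Finset (Fin n → ℕ) :=
  Fintype.piFinset (fun i => Finset.Icc (α i.succ) (α i.castSucc))

def GLw (y a : ℕ) : F := if y = a then -q else if y + 1 = a then t else 0

def GRw (y b : ℕ) : F := if y = b then 1 else if y = b + 1 then -q * t else 0

/-- `w(μ_j)` where `a1 = α_j`, `a2 = α_{j+1}`, `m = μ_j`. -/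
def wgt (a1 a2 m : ℕ) : F :=
  (if m = a1 ∨ m = a2 then 0 else (1 - q) * (1 - t)) + GLw m a1 + GRw m a2

/-- The tridiagonal determinant `M(α; μ)`. -/
def Mdet (n : ℕ) (α : Fin (n+1) → ℕ) (μ : Fin n → ℕ) : F :=
  Matrix.det (Matrix.of fun i j : Fin n =>
    if i = j then wgt (α i.castSucc) (α i.succ) (μ i)
    else if (i : ℕ) + 1 = (j : ℕ) then 1
    else if (j : ℕ) + 1 = (i : ℕ) then GRw (μ j) (α i.castSucc) * GLw (μ i) (α i.castSucc)
    else 0)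

def tot {n : ℕ} (f : Fin n → ℕ) : ℕ := ∑ i, f i

/-!
Expanding `P_λ` according to the position `σ(1)` of the first variable gives the first-row
expansion `P_λ = Σ_i x_i^{λ_1} ∏_{a ≠ i} (x_i - t x_a)/(x_i - x_a) · ζ_i(P_{λ'})`, and expanding
each `ζ_i(P_{λ'})` the same way writes everything in terms of the `ζ_{i,j}(P_{λ''})`. After
subtracting the right-hand side, the `i = 1` term of the first expansion and the correction
terms cancel: the coefficient of `ζ_{1,i}(P_{λ''})` vanishes by a two-variable rational identity,
and the coefficients of `ζ_{i,j}(P_{λ''})` with `i, j ≥ 2` are antisymmetric in `(i, j)` by a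
three-variable one.
-/

section Substitution

lemma subF_algebraMap (g : Fin 2 ⊕ ℕ → Fin 2 ⊕ ℕ) (hg : Function.Injective g) (p : Rr) :
    subF g hg (algebraMap Rr F p) = algebraMap Rr F (rename g p) :=
  IsFractionRing.lift_algebraMap _ p

lemma subF_x (f : ℕ → ℕ) (hf : Function.Injective (Sum.map id f)) (k : ℕ) :
    subF (Sum.map id f) hf (x k) = x (f k) := by
  rw [x, subF_algebraMap, rename_X]; rfl

lemma subF_t (f : ℕ → ℕ) (hf : Function.Injective (Sum.map id f)) :
    subF (Sum.map id f) hf t = t := by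
  rw [t, subF_algebraMap, rename_X]; rfl

lemma subF_comp_of_comp_eq {f g h : ℕ → ℕ} (hfg : f ∘ g = h)
    (hf : Function.Injective (Sum.map id f)) (hg : Function.Injective (Sum.map id g))
    (hh : Function.Injective (Sum.map id h)) :
    (subF (Sum.map id f) hf).comp (subF (Sum.map id g) hg) = subF (Sum.map id h) hh := by
  refine IsLocalization.ringHom_ext (nonZeroDivisors Rr) (RingHom.ext fun p => ?_)
  simp only [RingHom.coe_comp, Function.comp_apply, subF_algebraMap, rename_rename,
    Sum.map_comp_map, Function.id_comp, hfg]

end Substitution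

lemma x_sub_x_ne_zero {i j : ℕ} (h : i ≠ j) : x i - x j ≠ 0 := by
  intro hc
  have h0 : (X (Sum.inr i) - X (Sum.inr j) : Rr) = 0 :=
    IsFractionRing.injective Rr F (by simpa [x] using hc)
  have := congrArg (aeval (Sum.elim (fun _ => (0 : ℚ)) fun k => if k = i then (1 : ℚ) else 0)) h0
  simp [Ne.symm h] at this

lemma x_sub_t_mul_x_ne_zero (i j : ℕ) : x i - t * x j ≠ 0 := by
  intro hc
  have h0 : (X (Sum.inr i) - X (Sum.inl 1) * X (Sum.inr j) : Rr) = 0 :=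
    IsFractionRing.injective Rr F (by simpa [x, t] using hc)
  have := congrArg (aeval (Sum.elim (fun _ => (0 : ℚ)) fun _ => (1 : ℚ))) h0
  simp at this

section Shift

lemma shiftNat_eq_succAbove {n : ℕ} (i : Fin (n + 1)) (j : Fin n) :
    shiftNat i j = i.succAbove j := by
  simp only [shiftNat, Fin.succAbove, Fin.lt_def, Fin.val_castSucc]
  split_ifs <;> simp_all

lemma shiftNat_comp_shiftNat (i k : ℕ) :
    shiftNat i ∘ shiftNat k =
      shiftNat (max i (shiftNat i k)) ∘ shiftNat (min i (shiftNat i k)) := by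
  funext v
  simp only [shiftNat, Function.comp_apply, Nat.max_def, Nat.min_def]
  split_ifs <;> omega

lemma map_shiftNat_range {n i : ℕ} (hi : i < n + 2) :
    (range (n + 1)).map ⟨shiftNat i, shiftNat_inj i⟩ = (range (n + 2)).erase i := by
  ext b
  simp only [mem_map, mem_range, mem_erase, Function.Embedding.coeFn_mk]
  constructor
  · rintro ⟨a, ha, rfl⟩
    unfold shiftNat
    split_ifs <;> omega
  · intro hb
    refine ⟨if b < i then b else b - 1, by split_ifs <;> omega, ?_⟩
    unfold shiftNat
    split_ifs <;> omega

lemma zeta_x (i k : ℕ) : zeta i (x k) = x (shiftNat i k) := subF_x _ _ k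

lemma zeta_t (i : ℕ) : zeta i t = t := subF_t _ _

lemma zeta_comp_zeta (i k : ℕ) : (zeta i).comp (zeta k) = zetaP i (shiftNat i k) := by
  have hinj := (Function.injective_id (α := Fin 2)).sumMap ((shiftNat_inj i).comp (shiftNat_inj k))
  exact (subF_comp_of_comp_eq rfl _ _ hinj).trans
    (subF_comp_of_comp_eq (shiftNat_comp_shiftNat i k).symm _ _ hinj).symm

lemma zetaP_comm (i j : ℕ) : zetaP i j = zetaP j i := by
  rw [zetaP, zetaP, max_comm, min_comm]

end Shift

section Insertion

def insPerm (n : ℕ) (i : Fin (n + 1)) (τ : Equiv.Perm (Fin n)) : Equiv.Perm (Fin (n + 1)) :=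
  (finSuccEquiv n).trans ((Equiv.optionCongr τ).trans (finSuccEquiv' i).symm)

lemma insPerm_zero (n : ℕ) (i : Fin (n + 1)) (τ : Equiv.Perm (Fin n)) : insPerm n i τ 0 = i := by
  simp [insPerm]

lemma insPerm_succ (n : ℕ) (i : Fin (n + 1)) (τ : Equiv.Perm (Fin n)) (j : Fin n) :
    insPerm n i τ j.succ = i.succAbove (τ j) := by
  simp [insPerm]

lemma insPerm_bijective (n : ℕ) : Function.Bijective fun p : Fin (n + 1) × Equiv.Perm (Fin n) =>
    insPerm n p.1 p.2 := by
  refine (Fintype.bijective_iff_injective_and_card _).2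
    ⟨?_, by simp [Fintype.card_perm, Nat.factorial_succ]⟩
  rintro ⟨i, τ⟩ ⟨i', τ'⟩ h
  obtain rfl : i = i' := by simpa [insPerm_zero] using congrArg (· 0) h
  have hτ : ∀ j, τ j = τ' j := fun j => Fin.succAbove_right_injective (p := i) <| by
    simpa [insPerm_succ] using congrArg (· j.succ) h
  simp [Equiv.ext hτ]

lemma permNat_of_lt {n k : ℕ} (σ : Equiv.Perm (Fin n)) (hk : k < n) :
    permNat n σ k = σ ⟨k, hk⟩ := dif_pos hk

lemma permNat_insPerm_zero (n : ℕ) (i : Fin (n + 1)) (τ : Equiv.Perm (Fin n)) :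
    permNat (n + 1) (insPerm n i τ) 0 = i := by
  rw [permNat_of_lt _ n.succ_pos, ← insPerm_zero n i τ]; rfl

lemma permNat_insPerm_comp_shiftNat_zero (n : ℕ) (i : Fin (n + 1)) (τ : Equiv.Perm (Fin n)) :
    permNat (n + 1) (insPerm n i τ) ∘ shiftNat 0 = shiftNat i ∘ permNat n τ := by
  funext k
  have hs : shiftNat 0 k = k + 1 := rfl
  simp only [Function.comp_apply, hs]
  by_cases hk : k < n
  · rw [permNat_of_lt _ (by omega), permNat_of_lt _ hk, shiftNat_eq_succAbove, ← insPerm_succ]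
    rfl
  · simp only [permNat, shiftNat, dif_neg hk, dif_neg (show ¬k + 1 < n + 1 by omega)]
    split_ifs <;> omega

lemma map_permNat_range (n : ℕ) (σ : Equiv.Perm (Fin n)) :
    (range n).map ⟨permNat n σ, permNat_inj n σ⟩ = range n := by
  refine eq_of_subset_of_card_le (fun b hb => ?_) (by simp)
  obtain ⟨a, ha, rfl⟩ := mem_map.1 hb
  rw [mem_range] at ha ⊢
  simp [permNat_of_lt σ ha]

lemma pact_x (n : ℕ) (σ : Equiv.Perm (Fin n)) (k : ℕ) : pact n σ (x k) = x (permNat n σ k) :=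
  subF_x _ _ k

lemma pact_insPerm_comp_zeta_zero (n : ℕ) (i : Fin (n + 1)) (τ : Equiv.Perm (Fin n)) :
    (pact (n + 1) (insPerm n i τ)).comp (zeta 0) = (zeta i).comp (pact n τ) := by
  have hinj := (Function.injective_id (α := Fin 2)).sumMap
    ((shiftNat_inj i).comp (permNat_inj n τ))
  exact (subF_comp_of_comp_eq (permNat_insPerm_comp_shiftNat_zero n i τ) _ _ hinj).trans
    (subF_comp_of_comp_eq rfl _ _ hinj).symm

end Insertion

section FirstRow

def hlFactor (S : Finset ℕ) (i : ℕ) : F := ∏ a ∈ S.erase i, (x i - t * x a) / (x i - x a)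

lemma subF_hlFactor (f : ℕ ↪ ℕ) (hf : Function.Injective (Sum.map id f)) (S : Finset ℕ) (i : ℕ) :
    subF (Sum.map id f) hf (hlFactor S i) = hlFactor (S.map f) (f i) := by
  simp only [hlFactor, map_prod, map_div₀, map_sub, map_mul, subF_x, subF_t, ← map_erase, prod_map]

lemma zeta_hlFactor (i : ℕ) (S : Finset ℕ) (k : ℕ) :
    zeta i (hlFactor S k) = hlFactor (S.map ⟨shiftNat i, shiftNat_inj i⟩) (shiftNat i k) :=
  subF_hlFactor ⟨_, _⟩ _ S k

lemma pact_hlFactor (n : ℕ) (σ : Equiv.Perm (Fin n)) (S : Finset ℕ) (k : ℕ) :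
    pact n σ (hlFactor S k) = hlFactor (S.map ⟨permNat n σ, permNat_inj n σ⟩) (permNat n σ k) :=
  subF_hlFactor ⟨_, _⟩ _ S k

lemma hlFactor_range_zero (n : ℕ) :
    hlFactor (range (n + 1)) 0 = ∏ j : Fin n, (x 0 - t * x (j + 1)) / (x 0 - x (j + 1)) := by
  rw [hlFactor, range_add_one', erase_insert (by simp), prod_map,
    ← Fin.prod_univ_eq_prod_range]
  rfl

def hlTerm (n : ℕ) (lam : Fin n → ℕ) : F :=
  (∏ i : Fin n, x i.val ^ lam i) *
    ∏ i : Fin n, ∏ j ∈ Ioi i, (x i.val - t * x j.val) / (x i.val - x j.val)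

lemma hlTerm_succ (n : ℕ) (lam : Fin (n + 1) → ℕ) :
    hlTerm (n + 1) lam =
      x 0 ^ lam 0 * hlFactor (range (n + 1)) 0 * zeta 0 (hlTerm n fun j => lam j.succ) := by
  have hs : ∀ k, zeta 0 (x k) = x (k + 1) := fun k => zeta_x 0 k
  simp only [hlTerm, hlFactor_range_zero, Fin.prod_univ_succ, Fin.prod_Ioi_zero,
    Fin.prod_Ioi_succ, Fin.val_succ, Fin.val_zero, map_mul, map_prod, map_pow, map_div₀, map_sub,
    hs, zeta_t]
  ring

lemma pact_insPerm_hlFactor (n : ℕ) (i : Fin (n + 1)) (τ : Equiv.Perm (Fin n)) :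
    pact (n + 1) (insPerm n i τ) (hlFactor (range (n + 1)) 0) = hlFactor (range (n + 1)) i := by
  rw [pact_hlFactor, map_permNat_range, permNat_insPerm_zero]

theorem HL_succ (n : ℕ) (lam : Fin (n + 1) → ℕ) :
    HL (n + 1) lam = ∑ i ∈ range (n + 1),
      x i ^ lam 0 * hlFactor (range (n + 1)) i * zeta i (HL n fun j => lam j.succ) := by
  have hterm : ∀ i τ, pact (n + 1) (insPerm n i τ) (hlTerm (n + 1) lam) =
      x i ^ lam 0 * hlFactor (range (n + 1)) i *
        zeta i (pact n τ (hlTerm n fun j => lam j.succ)) := by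
    intro i τ
    rw [hlTerm_succ, map_mul, map_mul, map_pow, pact_x, permNat_insPerm_zero,
      pact_insPerm_hlFactor, ← RingHom.comp_apply, pact_insPerm_comp_zeta_zero, RingHom.comp_apply]
  change ∑ σ, pact (n + 1) σ (hlTerm (n + 1) lam) = _
  rw [← Fintype.sum_bijective _ (insPerm_bijective n) _ _ fun _ => rfl, Fintype.sum_prod_type]
  simp only [hterm, ← mul_sum, ← map_sum]
  exact Fin.sum_univ_eq_sum_range (fun i => x i ^ lam 0 * hlFactor (range (n + 1)) i *
    zeta i (HL n fun j => lam j.succ)) _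

theorem zeta_HL_succ (n : ℕ) (lam : Fin (n + 1) → ℕ) {i : ℕ} (hi : i < n + 2) :
    zeta i (HL (n + 1) lam) = ∑ j ∈ (range (n + 2)).erase i,
      x j ^ lam 0 * hlFactor ((range (n + 2)).erase i) j *
        zetaP i j (HL n fun k => lam k.succ) := by
  rw [HL_succ, map_sum, ← map_shiftNat_range hi, sum_map]
  refine sum_congr rfl fun k _ => ?_
  rw [map_mul, map_mul, map_pow, zeta_x, zeta_hlFactor, ← RingHom.comp_apply, zeta_comp_zeta]
  rfl

end FirstRow

section Exchange

lemma hlFactor_eq_mul_hlFactor_erase {S : Finset ℕ} {i k : ℕ} (hk : k ∈ S) (hki : k ≠ i) :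
    hlFactor S i = (x i - t * x k) / (x i - x k) * hlFactor (S.erase k) i := by
  rw [hlFactor, ← mul_prod_erase _ _ (mem_erase.2 ⟨hki, hk⟩), erase_right_comm]
  rfl

lemma hlFactor_exchange_two {R : Finset ℕ} {i k : ℕ} (hi : i ∈ R) (hk : k ∈ R) (hik : i ≠ k) :
    hlFactor R k * hlFactor (R.erase k) i +
      (x k - t * x i) / (x i - t * x k) * hlFactor R i * hlFactor (R.erase i) k = 0 := by
  rw [hlFactor_eq_mul_hlFactor_erase hi hik, hlFactor_eq_mul_hlFactor_erase hk hik.symm]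
  have := x_sub_x_ne_zero hik
  have := x_sub_x_ne_zero hik.symm
  have key : (x k - t * x i) / (x k - x i) +
      (x k - t * x i) / (x i - t * x k) * ((x i - t * x k) / (x i - x k)) = 0 := by
    rw [div_mul_div_cancel₀ (x_sub_t_mul_x_ne_zero i k)]
    field_simp
    ring
  linear_combination (hlFactor (R.erase i) k * hlFactor (R.erase k) i) * key

lemma hlFactor_exchange_three {R : Finset ℕ} {i j k : ℕ} (hi : i ∈ R) (hj : j ∈ R) (hk : k ∈ R)
    (hij : i ≠ j) (hik : i ≠ k) (hjk : j ≠ k) :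
    ((x k - t * x i) / (x i - t * x k) * hlFactor R i * hlFactor (R.erase i) j +
        t * hlFactor (R.erase k) i * hlFactor ((R.erase k).erase i) j) +
      ((x k - t * x j) / (x j - t * x k) * hlFactor R j * hlFactor (R.erase j) i +
        t * hlFactor (R.erase k) j * hlFactor ((R.erase k).erase j) i) = 0 := by
  have hiRk : i ∈ R.erase k := mem_erase.2 ⟨hik, hi⟩
  have hjRk : j ∈ R.erase k := mem_erase.2 ⟨hjk, hj⟩
  have hkRi : k ∈ R.erase i := mem_erase.2 ⟨hik.symm, hk⟩
  have hkRj : k ∈ R.erase j := mem_erase.2 ⟨hjk.symm, hk⟩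
  set Pi := hlFactor ((R.erase k).erase j) i
  set Pj := hlFactor ((R.erase k).erase i) j
  have hRki : hlFactor (R.erase k) i = (x i - t * x j) / (x i - x j) * Pi :=
    hlFactor_eq_mul_hlFactor_erase hjRk hij.symm
  have hRkj : hlFactor (R.erase k) j = (x j - t * x i) / (x j - x i) * Pj :=
    hlFactor_eq_mul_hlFactor_erase hiRk hij
  have hRi : hlFactor R i = (x i - t * x k) / (x i - x k) * hlFactor (R.erase k) i :=
    hlFactor_eq_mul_hlFactor_erase hk hik.symm
  have hRj : hlFactor R j = (x j - t * x k) / (x j - x k) * hlFactor (R.erase k) j :=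
    hlFactor_eq_mul_hlFactor_erase hk hjk.symm
  have hRij : hlFactor (R.erase i) j = (x j - t * x k) / (x j - x k) * Pj := by
    rw [hlFactor_eq_mul_hlFactor_erase hkRi hjk.symm, erase_right_comm]
  have hRji : hlFactor (R.erase j) i = (x i - t * x k) / (x i - x k) * Pi := by
    rw [hlFactor_eq_mul_hlFactor_erase hkRj hik.symm, erase_right_comm]
  -- every factor is now `Pi * Pj` times ratios involving only `x_i`, `x_j`, `x_k`
  rw [hRi, hRj, hRki, hRkj, hRij, hRji]
  have := x_sub_x_ne_zero hij
  have := x_sub_x_ne_zero hij.symm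
  have := x_sub_x_ne_zero hik
  have := x_sub_x_ne_zero hjk
  have key : (x k - t * x i) / (x i - x k) * ((x i - t * x j) / (x i - x j)) *
        ((x j - t * x k) / (x j - x k)) +
      (x k - t * x j) / (x j - x k) * ((x j - t * x i) / (x j - x i)) *
        ((x i - t * x k) / (x i - x k)) +
      t * ((x i - t * x j) / (x i - x j) + (x j - t * x i) / (x j - x i)) = 0 := by
    field_simp
    ring
  have hci : (x k - t * x i) / (x i - t * x k) * ((x i - t * x k) / (x i - x k)) =
      (x k - t * x i) / (x i - x k) := div_mul_div_cancel₀ (x_sub_t_mul_x_ne_zero i k)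
  have hcj : (x k - t * x j) / (x j - t * x k) * ((x j - t * x k) / (x j - x k)) =
      (x k - t * x j) / (x j - x k) := div_mul_div_cancel₀ (x_sub_t_mul_x_ne_zero j k)
  linear_combination (Pi * Pj) * key +
    ((x i - t * x j) / (x i - x j) * ((x j - t * x k) / (x j - x k)) * Pi * Pj) * hci +
    ((x j - t * x i) / (x j - x i) * ((x i - t * x k) / (x i - x k)) * Pi * Pj) * hcj

end Exchange

lemma sum_sum_erase_eq_zero_of_antisymm {α M : Type*} [DecidableEq α] [AddCommMonoid M]
    (E : Finset α) (H : α → α → M) (h : ∀ i ∈ E, ∀ j ∈ E, i ≠ j → H i j + H j i = 0) :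
    ∑ i ∈ E, ∑ j ∈ E.erase i, H i j = 0 := by
  rw [sum_sigma']
  refine sum_involution (fun p _ => ⟨p.2, p.1⟩) (fun p hp => ?_) (fun p hp _ => ?_)
    (fun p hp => ?_) (fun _ _ => rfl)
  all_goals obtain ⟨hpE, hne, hp2⟩ : p.1 ∈ E ∧ p.2 ≠ p.1 ∧ p.2 ∈ E := by simpa using hp
  · exact h _ hpE _ hp2 hne.symm
  · exact fun heq => hne (congrArg Sigma.fst heq)
  · simpa using ⟨hp2, hne.symm, hpE⟩

-- `Z i` and `Y i j` stand for `ζ_i P_{λ'}` and `ζ_{i,j} P_{λ''}`; `hZ` is the first-row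
-- expansion of the former in terms of the latter.
theorem hlFactor_sum_cancel (R : Finset ℕ) {k : ℕ} (hk : k ∈ R) (d e : ℕ) (Z : ℕ → F)
    (Y : ℕ → ℕ → F) (hY : ∀ i j, Y i j = Y j i)
    (hZ : ∀ i ∈ R, Z i = ∑ j ∈ R.erase i, x j ^ e * hlFactor (R.erase i) j * Y i j) :
    x k ^ d * x k ^ e * hlFactor R k * Z k +
      ∑ i ∈ R.erase k, (x k - t * x i) / (x i - t * x k) * x k ^ d * x i ^ e * hlFactor R i * Z i +
      x k ^ d * ∑ i ∈ R.erase k, ∑ j ∈ (R.erase k).erase i,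
        t * x i ^ e * x j ^ e * hlFactor (R.erase k) i * hlFactor ((R.erase k).erase i) j *
          Y i j = 0 := by
  have hZi : ∀ i ∈ R.erase k, Z i = x k ^ e * hlFactor (R.erase i) k * Y k i +
      ∑ j ∈ (R.erase k).erase i, x j ^ e * hlFactor (R.erase i) j * Y i j := by
    intro i hi
    rw [hZ i (mem_of_mem_erase hi),
      ← add_sum_erase _ _ (mem_erase.2 ⟨(ne_of_mem_erase hi).symm, hk⟩), erase_right_comm, hY i k]
  have two_point : ∑ i ∈ R.erase k,
      (x k ^ d * x k ^ e * hlFactor R k * (x i ^ e * hlFactor (R.erase k) i * Y k i) +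
        (x k - t * x i) / (x i - t * x k) * x k ^ d * x i ^ e * hlFactor R i *
          (x k ^ e * hlFactor (R.erase i) k * Y k i)) = 0 := by
    refine sum_eq_zero fun i hi => ?_
    linear_combination (x k ^ d * x k ^ e * x i ^ e * Y k i) *
      hlFactor_exchange_two (mem_of_mem_erase hi) hk (ne_of_mem_erase hi)
  have three_point : ∑ i ∈ R.erase k, ∑ j ∈ (R.erase k).erase i,
      ((x k - t * x i) / (x i - t * x k) * x k ^ d * x i ^ e * hlFactor R i *
          (x j ^ e * hlFactor (R.erase i) j * Y i j) +
        x k ^ d * (t * x i ^ e * x j ^ e * hlFactor (R.erase k) i *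
          hlFactor ((R.erase k).erase i) j * Y i j)) = 0 := by
    refine sum_sum_erase_eq_zero_of_antisymm _ _ fun i hi j hj hij => ?_
    rw [hY j i]
    linear_combination (x k ^ d * x i ^ e * x j ^ e * Y i j) *
      hlFactor_exchange_three (mem_of_mem_erase hi) (mem_of_mem_erase hj) hk hij
        (ne_of_mem_erase hi) (ne_of_mem_erase hj)
  have hZsum : ∑ i ∈ R.erase k,
      (x k - t * x i) / (x i - t * x k) * x k ^ d * x i ^ e * hlFactor R i * Z i =
      ∑ i ∈ R.erase k, (x k - t * x i) / (x i - t * x k) * x k ^ d * x i ^ e * hlFactor R i *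
          (x k ^ e * hlFactor (R.erase i) k * Y k i) +
        ∑ i ∈ R.erase k, (x k - t * x i) / (x i - t * x k) * x k ^ d * x i ^ e * hlFactor R i *
          ∑ j ∈ (R.erase k).erase i, x j ^ e * hlFactor (R.erase i) j * Y i j := by
    rw [← sum_add_distrib]
    exact sum_congr rfl fun i hi => by rw [hZi i hi, mul_add]
  rw [sum_add_distrib] at two_point
  simp only [sum_add_distrib, ← mul_sum] at three_point
  rw [hZ k hk, mul_sum, hZsum]
  linear_combination two_point + three_point

/-- **Lemma 2 (key recursion).** For a weakly decreasing tuple `λ` of length `n > 2`,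
with `O_i = ((x_i - t x_1) x_i^{λ_1} - (x_1 - t x_i) x_1^{λ_1-λ_2} x_i^{λ_2})/(x_i - t x_1)`:
`P_λ = Σ_{i=2}^n O_i ∏_{a≠i}(x_i-t x_a)/(x_i-x_a) ζ_i(P_{λ'})
  - x_1^{λ_1-λ_2} Σ_{2≤i≠j≤n} t x_i^{λ_2} x_j^{λ_2} ∏_{a≠1,i} ⋯ ∏_{a≠1,i,j} ⋯ ζ_{i,j}(P_{λ''})`. -/
theorem hall_littlewood_key_recursion (m : ℕ) (lam : Fin (m + 3) → ℕ)
    (hlam : ∀ i j : Fin (m + 3), i ≤ j → lam j ≤ lam i) :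
    HL (m + 3) lam =
      (∑ i ∈ Finset.Icc 1 (m + 2),
        (((x i - t * x 0) * x i ^ lam 0 -
            (x 0 - t * x i) * x 0 ^ (lam 0 - lam 1) * x i ^ lam 1) / (x i - t * x 0)) *
        (∏ a ∈ (Finset.range (m + 3)).erase i, (x i - t * x a) / (x i - x a)) *
        zeta i (HL (m + 2) (fun j => lam j.succ))) -
      x 0 ^ (lam 0 - lam 1) *
        ∑ i ∈ Finset.Icc 1 (m + 2), ∑ j ∈ (Finset.Icc 1 (m + 2)).erase i,
          t * x i ^ lam 1 * x j ^ lam 1 *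
          (∏ a ∈ ((Finset.range (m + 3)).erase 0).erase i, (x i - t * x a) / (x i - x a)) *
          (∏ a ∈ (((Finset.range (m + 3)).erase 0).erase i).erase j,
            (x j - t * x a) / (x j - x a)) *
          zetaP i j (HL (m + 1) (fun l => lam l.succ.succ)) := by
  have hR : Icc 1 (m + 2) = (range (m + 3)).erase 0 := by
    ext a
    simp only [mem_Icc, mem_erase, mem_range]
    omega
  have hHL : HL (m + 3) lam = ∑ i ∈ range (m + 3),
      x i ^ lam 0 * hlFactor (range (m + 3)) i * zeta i (HL (m + 2) fun j => lam j.succ) :=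
    HL_succ (m + 2) lam
  have hpow : x 0 ^ (lam 0 - lam 1) * x 0 ^ lam 1 = x 0 ^ lam 0 := by
    rw [← pow_add, Nat.sub_add_cancel (hlam 0 1 (Fin.zero_le _))]
  have hO : ∀ i : ℕ, ((x i - t * x 0) * x i ^ lam 0 -
      (x 0 - t * x i) * x 0 ^ (lam 0 - lam 1) * x i ^ lam 1) / (x i - t * x 0) =
      x i ^ lam 0 - (x 0 - t * x i) / (x i - t * x 0) * x 0 ^ (lam 0 - lam 1) * x i ^ lam 1 := by
    intro i
    field_simp [x_sub_t_mul_x_ne_zero i 0]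
  have hcancel := hlFactor_sum_cancel (range (m + 3)) (k := 0) (by simp) (lam 0 - lam 1) (lam 1)
    (fun i => zeta i (HL (m + 2) fun j => lam j.succ))
    (fun i j => zetaP i j (HL (m + 1) fun l => lam l.succ.succ)) (fun i j => by rw [zetaP_comm])
    (fun i hi => zeta_HL_succ _ _ (mem_range.1 hi))
  rw [hR, hHL, ← add_sum_erase _ _ (mem_range.2 (by omega : 0 < m + 3))]
  simp only [hO, ← hlFactor.eq_1]
  simp only [sub_mul, sum_sub_distrib]
  linear_combination
    hcancel - (hlFactor (range (m + 3)) 0 * zeta 0 (HL (m + 2) fun j => lam j.succ)) * hpow
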